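/- arXiv:2308.12239 — 2 statements merged into one kernel-verified Lean document; each statement's English description precedes it below -/
import Mathlib

section
/- Every rank-2 matroid M satisfying |X|/r(X) ≤ |E(M)|/2 for all nonempty X ⊆ E(M) is cyclically orderable: there is a cyclic permutation e1 e2 ... em of E(M) such that every 2 consecutive elements (cyclically) form a basis. -/
open Set

variable {α : Type*}

/-- The rank of a set `X` in a matroid: size of a largest independent subset of `X`. -/
noncomputable def Matroid.rkSet (M : Matroid α) (X : Set α) : ℕ :=
  sSup {n | ∃ I, M.Indep I ∧ I ⊆ X ∧ I.ncard = n}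

/-- The rank of a matroid. -/
noncomputable def Matroid.rank (M : Matroid α) : ℕ := M.rkSet M.E

/-- A circuit is a minimal dependent set. -/
def Matroid.IsCircuitMin (M : Matroid α) (C : Set α) : Prop :=
  M.Dep C ∧ ∀ D, D ⊂ C → M.Indep D

/-- A paving matroid: every circuit has size at least the rank. -/
def Matroid.Paving (M : Matroid α) : Prop :=
  ∀ C, M.IsCircuitMin C → M.rank ≤ C.ncard

/-- Deletion of a set from a matroid. -/
noncomputable def Matroid.del (M : Matroid α) (D : Set α) : Matroid α :=
  M.restrict (M.E \ D)

/-- A cyclic ordering of a matroid, given as a list: every `M.rank`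
cyclically-consecutive entries form a base. -/
def Matroid.IsCyclicOrdering (M : Matroid α) (l : List α) : Prop :=
  l.Nodup ∧ {x | x ∈ l} = M.E ∧
    ∀ i : ℕ, M.IsBase {x | x ∈ (l.rotate i).take M.rank}

/-!
Two elements of a loopless rank-2 matroid form a base exactly when they are not parallel,
and the density hypothesis applied to a single element and to a parallel class (a set of
rank 1) shows that `M` is loopless and that every parallel class has at most `m / 2`
elements. It remains to arrange `m` colored objects, no color used more than `m / 2`
times, in a cycle without two equal colors next to each other. List them with every
color class contiguous and read the list as `L[0], L[h], L[1], L[h+1], …`, `h = ⌈m / 2⌉`: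
cyclic neighbours then lie at distance at least `h - 1` in `L`, which no class of size
`< m / 2` spans. A class of size exactly `m / 2` is put in the first half and everything
else in the second, and then cyclic neighbours always come from different halves.
-/

open scoped Finset

variable {β : Type*}

/-- The `j`-th entry of `L[0], L[h], L[1], L[h+1], …` (with `h = ⌈m / 2⌉`, `m = L.length`) is
`L[interleaveIdx m j]`. -/
def interleaveIdx (m j : ℕ) : ℕ :=
  if j % 2 = 0 then j / 2 else (m + 1) / 2 + j / 2

section interleaveIdx

variable {m i j : ℕ}

lemma interleaveIdx_lt (hj : j < m) : interleaveIdx m j < m := by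
  unfold interleaveIdx; split_ifs <;> omega

lemma interleaveIdx_inj (hi : i < m) (hj : j < m)
    (h : interleaveIdx m i = interleaveIdx m j) : i = j := by
  unfold interleaveIdx at h; split_ifs at h <;> omega

lemma add_one_mod_eq_or_of_lt (hj : j < m) :
    (j + 1) % m = j + 1 ∧ j + 1 < m ∨ (j + 1) % m = 0 ∧ j + 1 = m := by
  rcases (Nat.succ_le_of_lt hj).lt_or_eq with h | h
  · exact Or.inl ⟨Nat.mod_eq_of_lt h, h⟩
  · exact Or.inr ⟨by rw [← h, Nat.mod_self], h⟩

lemma interleaveIdx_succ_spread (hm : 2 ≤ m) (hj : j < m) :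
    interleaveIdx m j < interleaveIdx m ((j + 1) % m) ∧
        interleaveIdx m j + (m + 1) / 2 ≤ interleaveIdx m ((j + 1) % m) + 1 ∨
      interleaveIdx m ((j + 1) % m) < interleaveIdx m j ∧
        interleaveIdx m ((j + 1) % m) + (m + 1) / 2 ≤ interleaveIdx m j + 1 := by
  unfold interleaveIdx
  rcases add_one_mod_eq_or_of_lt hj with ⟨h, h'⟩ | ⟨h, h'⟩ <;> rw [h] <;> split_ifs <;>
    omega

lemma interleaveIdx_succ_halves (hm : m % 2 = 0) (hj : j < m) :
    interleaveIdx m j < m / 2 ↔ m / 2 ≤ interleaveIdx m ((j + 1) % m) := by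
  unfold interleaveIdx
  rcases add_one_mod_eq_or_of_lt hj with ⟨h, h'⟩ | ⟨h, h'⟩ <;> rw [h] <;> split_ifs <;>
    omega

end interleaveIdx

noncomputable def interleavePerm (m : ℕ) : Equiv.Perm (Fin m) :=
  Equiv.ofBijective (fun j ↦ ⟨interleaveIdx m j, interleaveIdx_lt j.2⟩)
    (Finite.injective_iff_bijective.mp fun i j h ↦
      Fin.ext (interleaveIdx_inj i.2 j.2 (congrArg Fin.val h)))

namespace List

noncomputable def interleaveHalves (L : List α) : List α :=
  ofFn (L.get ∘ interleavePerm L.length)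

lemma interleaveHalves_perm (L : List α) : L.interleaveHalves ~ L := by
  unfold interleaveHalves
  simpa only [ofFn_get] using (interleavePerm L.length).ofFn_comp_perm L.get

def CyclicChain (R : α → α → Prop) (l : List α) : Prop :=
  ∀ i (hi : i < l.length), R l[i] (l[(i + 1) % l.length]'(Nat.mod_lt _ (Nat.zero_lt_of_lt hi)))

lemma cyclicChain_interleaveHalves {R : α → α → Prop} {L : List α}
    (hR : ∀ j (hj : j < L.length), R (L[interleaveIdx L.length j]'(interleaveIdx_lt hj))
      (L[interleaveIdx L.length ((j + 1) % L.length)]'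
        (interleaveIdx_lt (Nat.mod_lt _ (by omega))))) :
    L.interleaveHalves.CyclicChain R := by
  intro i hi
  simp only [interleaveHalves, length_ofFn, List.getElem_ofFn] at hi ⊢
  exact hR i hi

lemma cyclicChain_interleaveHalves_append {c : α → β} {b : β} {A B : List α}
    (hA : ∀ x ∈ A, c x = b) (hB : ∀ x ∈ B, c x ≠ b) (hlen : B.length = A.length) :
    (A ++ B).interleaveHalves.CyclicChain (c · ≠ c ·) := by
  have hcolor : ∀ t (ht : t < (A ++ B).length), c (A ++ B)[t] = b ↔ t < A.length := by
    intro t ht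
    rw [getElem_append]
    split_ifs with h
    · simp [h, hA _ (getElem_mem _)]
    · simp [h, hB _ (getElem_mem _)]
  refine cyclicChain_interleaveHalves fun j hj heq ↦ ?_
  have hhalf : (A ++ B).length / 2 = A.length := by simp [hlen]; omega
  have hhalves := interleaveIdx_succ_halves (by simp [hlen]; omega) hj
  rw [hhalf] at hhalves
  have hp := hcolor _ (interleaveIdx_lt hj)
  have hq := hcolor _ (interleaveIdx_lt (Nat.mod_lt (j + 1) (Nat.zero_lt_of_lt hj)))
  rw [heq, hq] at hp
  omega

def ColorContiguous (c : α → β) (L : List α) : Prop :=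
  ∀ p t q (_ : p ≤ t) (_ : t ≤ q) (_ : q < L.length), c L[p] = c L[q] → c L[t] = c L[p]

lemma ColorContiguous.add_one_sub_le_card_filter [DecidableEq β] {c : α → β} {L : List α}
    (hL : L.ColorContiguous c) (hnd : L.Nodup) {s : Finset α} (hmem : ∀ x ∈ L, x ∈ s)
    {p q : ℕ} (hpq : p ≤ q) (hq : q < L.length) (heq : c L[p] = c L[q]) :
    q + 1 - p ≤ #{y ∈ s | c y = c L[p]} := by
  rw [← Nat.card_Icc]
  refine Finset.card_le_card_of_injOn (fun t ↦ L.getD t L[p]) (fun t ht ↦ ?_)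
    fun t ht u hu htu ↦ ?_
  · rw [Finset.coe_Icc, Set.mem_Icc] at ht
    simp only [Finset.coe_filter, Set.mem_ofPred_eq, getD_eq_getElem _ _ (ht.2.trans_lt hq)]
    exact ⟨hmem _ (getElem_mem _), hL p t q ht.1 ht.2 hq heq⟩
  · simp only [Finset.coe_Icc, Set.mem_Icc] at ht hu
    simp only [getD_eq_getElem _ _ (ht.2.trans_lt hq), getD_eq_getElem _ _ (hu.2.trans_lt hq)]
      at htu
    exact (hnd.getElem_inj_iff).mp htu

lemma ColorContiguous.cyclicChain_interleaveHalves [DecidableEq β] {c : α → β} {L : List α}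
    (hL : L.ColorContiguous c) (hnd : L.Nodup) {s : Finset α} (hmem : ∀ x ∈ L, x ∈ s)
    (hsmall : ∀ x ∈ s, 2 * #{y ∈ s | c y = c x} < L.length) :
    L.interleaveHalves.CyclicChain (c · ≠ c ·) := by
  refine List.cyclicChain_interleaveHalves fun j hj heq ↦ ?_
  have hm : 2 ≤ L.length := by
    have := hsmall _ (hmem _ (getElem_mem hj))
    have : 0 < #{y ∈ s | c y = c L[j]} :=
      Finset.card_pos.2 ⟨L[j], Finset.mem_filter.2 ⟨hmem _ (getElem_mem hj), rfl⟩⟩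
    omega
  have hshort : ∀ p q (hpq : p < q) (hq : q < L.length), c L[p] = c L[q] →
      2 * (q + 1 - p) < L.length := fun p q hpq hq heq ↦
    (Nat.mul_le_mul_left 2 (hL.add_one_sub_le_card_filter hnd hmem hpq.le hq heq)).trans_lt
      (hsmall _ (hmem _ (getElem_mem _)))
  rcases interleaveIdx_succ_spread hm hj with ⟨hlt, hspread⟩ | ⟨hlt, hspread⟩
  · have := hshort _ _ hlt (interleaveIdx_lt (Nat.mod_lt _ (by omega))) heq
    omega
  · have := hshort _ _ hlt (interleaveIdx_lt hj) heq.symm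
    omega

end List

lemma Finset.exists_colorContiguous (c : α → β) (s : Finset α) :
    ∃ L : List α, L.Perm s.toList ∧ L.ColorContiguous c := by
  classical
  let _ : LinearOrder β := WellOrderingRel.isWellOrder.linearOrder
  set L := s.toList.mergeSort (fun a b ↦ c a ≤ c b)
  have hperm : L.Perm s.toList := List.mergeSort_perm _ _
  have hsorted : L.Pairwise (fun a b ↦ c a ≤ c b) := by
    simpa using List.pairwise_mergeSort (le := fun a b ↦ c a ≤ c b)
      (fun a b d hab hbd ↦ by simpa using le_trans (by simpa using hab) (by simpa using hbd))
      (fun a b ↦ by simpa using le_total (c a) (c b)) s.toList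
  have hmono : ∀ i j (hij : i ≤ j) (hj : j < L.length), c L[i] ≤ c L[j] := by
    intro i j hij hj
    rcases hij.lt_or_eq with h | rfl
    · exact List.pairwise_iff_getElem.1 hsorted i j _ hj h
    · rfl
  refine ⟨L, hperm, fun p t q hpt htq hq heq ↦ ?_⟩
  exact le_antisymm (heq ▸ hmono t q htq hq) (hmono p t hpt _)

theorem Finset.exists_cyclicChain_ne [DecidableEq β] (c : α → β) (s : Finset α)
    (hc : ∀ x ∈ s, 2 * #{y ∈ s | c y = c x} ≤ #s) :
    ∃ l : List α, l.Perm s.toList ∧ l.CyclicChain (c · ≠ c ·) := by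
  suffices ∃ L : List α, L.Perm s.toList ∧ L.interleaveHalves.CyclicChain (c · ≠ c ·) by
    obtain ⟨L, hperm, hchain⟩ := this
    exact ⟨_, L.interleaveHalves_perm.trans hperm, hchain⟩
  by_cases hhalf : ∃ x ∈ s, 2 * #{y ∈ s | c y = c x} = #s
  · obtain ⟨x, -, hx⟩ := hhalf
    refine ⟨{y ∈ s | c y = c x}.toList ++ {y ∈ s | c y ≠ c x}.toList, ?_, ?_⟩
    · have hnd : ({y ∈ s | c y = c x}.toList ++ {y ∈ s | c y ≠ c x}.toList).Nodup := by
        refine (nodup_toList _).append (nodup_toList _) (List.disjoint_left.2 fun y hyA hyB ↦ ?_)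
        simp only [mem_toList, mem_filter] at hyA hyB
        exact hyB.2 hyA.2
      refine (List.perm_ext_iff_of_nodup hnd s.nodup_toList).2 fun y ↦ ?_
      simp only [List.mem_append, mem_toList, mem_filter]
      tauto
    · refine List.cyclicChain_interleaveHalves_append (b := c x)
        (fun y hy ↦ (mem_filter.1 (mem_toList.1 hy)).2)
        (fun y hy ↦ (mem_filter.1 (mem_toList.1 hy)).2) ?_
      have := card_filter_add_card_filter_not (s := s) (fun y ↦ c y = c x)
      simp only [length_toList, ne_eq]
      omega
  · obtain ⟨L, hperm, hL⟩ := s.exists_colorContiguous c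
    have hlen : L.length = #s := by rw [hperm.length_eq, length_toList]
    refine ⟨L, hperm, hL.cyclicChain_interleaveHalves (hperm.nodup_iff.2 s.nodup_toList)
      (fun x hx ↦ mem_toList.1 (hperm.subset hx)) fun x hx ↦ ?_⟩
    have := hc x hx
    have : 2 * #{y ∈ s | c y = c x} ≠ #s := fun h ↦ hhalf ⟨x, hx, h⟩
    omega

lemma List.take_two_rotate (l : List α) (hl : 2 ≤ l.length) {i : ℕ} (hi : i < l.length) :
    (l.rotate i).take 2 = [l[i], l[(i + 1) % l.length]'(Nat.mod_lt _ (by omega))] := by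
  refine List.ext_getElem (by simp; omega) fun k hk _ ↦ ?_
  simp only [length_take, length_rotate] at hk
  rcases (show k = 0 ∨ k = 1 by omega) with rfl | rfl <;>
    simp [getElem_take, getElem_rotate, Nat.mod_eq_of_lt hi, add_comm]

namespace Matroid

variable {M : Matroid α} {X : Set α} {a b e : α}

lemma rkSet_eq_eRk [M.RankFinite] (X : Set α) : (M.rkSet X : ℕ∞) = M.eRk X := by
  obtain ⟨I, hI⟩ := M.exists_isBasis' X
  have hIfin := hI.indep.finite
  have hmax : IsGreatest {n | ∃ J, M.Indep J ∧ J ⊆ X ∧ J.ncard = n} I.ncard := by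
    refine ⟨⟨I, hI.indep, hI.subset, rfl⟩, ?_⟩
    rintro _ ⟨J, hJ, hJX, rfl⟩
    have := (hJ.encard_le_eRk_of_subset hJX).trans_eq hI.encard_eq_eRk.symm
    rwa [← hJ.finite.cast_ncard_eq, ← hIfin.cast_ncard_eq, Nat.cast_le] at this
  rw [rkSet, hmax.csSup_eq, hIfin.cast_ncard_eq, hI.encard_eq_eRk]

lemma rkSet_le_one_of_subset_closure_singleton [M.RankFinite] (hX : X ⊆ M.closure {e}) :
    M.rkSet X ≤ 1 := by
  have := (M.eRk_mono hX).trans ((M.eRk_closure_eq _).trans_le (M.eRk_singleton_le e))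
  rwa [← rkSet_eq_eRk, ← Nat.cast_one, Nat.cast_le] at this

lemma isNonloop_of_rkSet_singleton_ne_zero [M.RankFinite] (h : M.rkSet {e} ≠ 0) :
    M.IsNonloop e := by
  have hle : M.rkSet {e} ≤ 1 := by
    have := (M.rkSet_eq_eRk {e}).trans_le (M.eRk_singleton_le e)
    exact_mod_cast this
  rw [← eRk_singleton_eq_one_iff, ← rkSet_eq_eRk, show M.rkSet {e} = 1 by omega, Nat.cast_one]

lemma IsNonloop.isBase_pair_of_closure_ne [M.RankFinite] (hrank : M.eRank = 2)
    (ha : M.IsNonloop a) (hb : M.IsNonloop b) (hab : M.closure {a} ≠ M.closure {b}) :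
    M.IsBase {a, b} := by
  have hne : a ≠ b := by rintro rfl; exact hab rfl
  have hI : M.Indep {a, b} := by
    by_contra h
    exact hab ((ha.closure_eq_closure_iff_eq_or_dep hb).2 (Or.inr h))
  refine hI.isBase_of_eRk_ge (toFinite _) ?_
  rw [hrank, hI.eRk_eq_encard, encard_pair hne]

lemma isCyclicOrdering_of_cyclicChain_isBase {l : List α} (hr : M.rank = 2) (hnd : l.Nodup)
    (hE : {x | x ∈ l} = M.E) (hl : 2 ≤ l.length)
    (hchain : l.CyclicChain fun a b ↦ M.IsBase {a, b}) : M.IsCyclicOrdering l := by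
  refine ⟨hnd, hE, fun i ↦ ?_⟩
  have hk : i % l.length < l.length := Nat.mod_lt _ (by omega)
  rw [hr, ← List.rotate_mod, List.take_two_rotate l hl hk]
  convert hchain _ hk using 1
  ext; simp

end Matroid

/-- The rank-2 case of the main theorem: every rank-2 matroid with
`γ(M) = β(E(M))` is cyclically orderable. -/
theorem stmt12 (M : Matroid α) [M.Finite] (hr : M.rank = 2) (hm : 2 ≤ M.E.ncard)
    (hγ : ∀ X ⊆ M.E, X.Nonempty → X.ncard * 2 ≤ M.E.ncard * M.rkSet X) :
    ∃ l : List α, M.IsCyclicOrdering l := by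
  classical
  have hrank : M.eRank = 2 := by
    rw [← M.eRk_ground, ← M.rkSet_eq_eRk, ← Matroid.rank, hr, Nat.cast_ofNat]
  have hnonloop : ∀ e ∈ M.E, M.IsNonloop e := fun e he ↦
    Matroid.isNonloop_of_rkSet_singleton_ne_zero fun h0 ↦ by
      simpa [h0] using hγ {e} (singleton_subset_iff.2 he) (singleton_nonempty e)
  set E := M.ground_finite.toFinset
  have hcard : M.E.ncard = #E := ncard_eq_toFinset_card _ _
  have hclass : ∀ e ∈ E, 2 * #{x ∈ E | M.closure {x} = M.closure {e}} ≤ #E := by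
    intro e he
    set C := {x ∈ E | M.closure {x} = M.closure {e}}
    have hCE : (C : Set α) ⊆ M.E := fun x hx ↦
      (Finite.mem_toFinset _).1 (Finset.mem_filter.1 hx).1
    have hrk : M.rkSet C ≤ 1 := M.rkSet_le_one_of_subset_closure_singleton fun x hx ↦
      (Finset.mem_filter.1 hx).2 ▸ M.mem_closure_self x (hCE hx)
    have := hγ C hCE ⟨e, Finset.mem_filter.2 ⟨he, rfl⟩⟩
    rw [ncard_coe_finset, hcard] at this
    nlinarith
  obtain ⟨l, hperm, hchain⟩ := E.exists_cyclicChain_ne (fun x ↦ M.closure {x}) hclass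
  have hmem : ∀ x, x ∈ l ↔ x ∈ M.E := by simp [hperm.mem_iff, E]
  refine ⟨l, M.isCyclicOrdering_of_cyclicChain_isBase hr (hperm.nodup_iff.2 E.nodup_toList)
    (Set.ext hmem) (by rwa [hperm.length_eq, Finset.length_toList, ← hcard]) fun i hi ↦ ?_⟩
  exact (hnonloop _ ((hmem _).1 (l.getElem_mem hi))).isBase_pair_of_closure_ne hrank
    (hnonloop _ ((hmem _).1 (List.getElem_mem _))) (hchain i hi)
end

section
/- Let M be a paving matroid of rank r with basis S = {s1,...,sr} such that M\S has rank r, and let e1 e2 ... em be a cyclic ordering of M\S. Fix j and define x_t = e_{j-t} and y_t = e_{j+t-1} (indices mod m), X = {x1,...,x_{r-1}}, Y = {y1,...,y_{r-1}}. Let H1 be the collection of sets C ∩ S where C is an r-circuit of M with {x1,...,xi} ⊂ C ⊆ {x1,...,xi} ∪ S for some i ∈ [r-1], and H2 likewise with the y's. Then: if A, B ∈ H1 with |A| = |B| + 1 and B ⊂ A, then every |B|-subset of A is in H1 (and similarly for H2). -/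
open Set

variable {α : Type*}

/-- `Xset e j i = {x₁, …, xᵢ}` where `xₜ = e_{j - t}` (indices mod `m`). -/
def Xset {m : ℕ} (e : ZMod m → α) (j : ZMod m) (i : ℕ) : Set α :=
  {a | ∃ t : ℕ, 1 ≤ t ∧ t ≤ i ∧ a = e (j - (t : ZMod m))}

/-- `Yset e j i = {y₁, …, yᵢ}` where `yₜ = e_{j + t - 1}` (indices mod `m`). -/
def Yset {m : ℕ} (e : ZMod m → α) (j : ZMod m) (i : ℕ) : Set α :=
  {a | ∃ t : ℕ, 1 ≤ t ∧ t ≤ i ∧ a = e (j + (t : ZMod m) - 1)}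

/-- The family of traces on `S` of `r`-circuits `C` with
`Z i ⊆ C ⊆ Z i ∪ S` for some `i ∈ [r-1]`. -/
def Hcol (M : Matroid α) (S : Set α) (r : ℕ) (Z : ℕ → Set α) : Set (Set α) :=
  {T | ∃ C, ∃ i : ℕ, 1 ≤ i ∧ i ≤ r - 1 ∧ M.IsCircuitMin C ∧ C.ncard = r ∧
    Z i ⊆ C ∧ C ⊆ Z i ∪ S ∧ T = C ∩ S}

/-- Property (S1) for a family of sets. -/
def PropS1Set (𝒮 : Set (Set α)) : Prop :=
  ∀ A ∈ 𝒮, ∀ B ∈ 𝒮, A.ncard = B.ncard + 1 → B ⊂ A →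
    ∀ C ⊆ A, C.ncard = B.ncard → C ∈ 𝒮

/-!
Let `A = C_A ∩ S` and `B = C_B ∩ S` with `B ⊂ A` and `|A| = |B| + 1`. The `Z`-parts of the two
circuits form a chain, and counting shows `Z(i_B)` has exactly one element more than
`Z(i_A)`; hence the circuit `C_B` has at most one element outside `C_A`, so `C_B ⊆ cl(C_A)`.
For an `|B|`-subset `D` of `A`, the `r`-element set `Z(i_B) ∪ D` lies in `cl(C_A)`, which has
rank `r - 1`, so it is dependent. In a paving matroid of rank `r` an `r`-element dependent set
is a circuit, and the trace of this one on `S` is `D`.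
-/

namespace Matroid

variable {M : Matroid α} {C X : Set α}

lemma isCircuitMin_iff_isCircuit : M.IsCircuitMin C ↔ M.IsCircuit C := by
  rw [isCircuit_iff_forall_ssubset]
  exact Iff.rfl

lemma IsCircuit.subset_closure_of_subsingleton_diff (hC : M.IsCircuit C)
    (hCX : (C \ X).Subsingleton) : C ⊆ M.closure X := by
  obtain h | ⟨x, hx⟩ := hCX.eq_empty_or_singleton
  · exact (subset_inter (sdiff_eq_empty.mp h) hC.subset_ground).trans
      (M.inter_ground_subset_closure X)
  · refine (hC.subset_closure_sdiff_singleton x).trans (M.closure_subset_closure ?_)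
    rw [← hx, sdiff_sdiff_right_self]
    exact inter_subset_right

/-- The closure of a finite circuit `C` has rank `|C| - 1`, so it holds no independent set of
size `|C|`. -/
lemma IsCircuit.dep_of_subset_closure (hC : M.IsCircuit C) (hCfin : C.Finite)
    (hXC : X ⊆ M.closure C) (hCX : C.encard ≤ X.encard) : M.Dep X := by
  refine ⟨fun hX ↦ ?_, hXC.trans (M.closure_subset_ground C)⟩
  have hXr : X.encard ≤ M.eRk C := by
    rw [← M.eRk_closure_eq C]
    exact hX.encard_le_eRk_of_subset hXC
  have hrfin : M.eRk C ≠ ⊤ := ((M.eRk_le_encard C).trans_lt hCfin.encard_lt_top).ne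
  have hlt : M.eRk C < M.eRk C := by
    rw [← ENat.add_one_le_iff hrfin, hC.eRk_add_one_eq]
    exact hCX.trans hXr
  exact hlt.false

lemma Paving.isCircuit_of_dep (hM : M.Paving) (hX : M.Dep X) (hXfin : X.Finite)
    (hXr : X.ncard ≤ M.rank) : M.IsCircuit X := by
  obtain ⟨C, hCX, hC⟩ := hX.exists_isCircuit_subset
  have hCr := hM C (isCircuitMin_iff_isCircuit.mpr hC)
  rwa [eq_of_subset_of_ncard_le hCX (by omega) hXfin] at hC

end Matroid

lemma ncard_add_ncard_inter_of_subset_union {Z S C : Set α} (hZS : Disjoint Z S) (hZC : Z ⊆ C)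
    (hCZS : C ⊆ Z ∪ S) (hC : C.Finite) : Z.ncard + (C ∩ S).ncard = C.ncard := by
  have hCS : C ∩ S = C \ Z := by
    ext a
    constructor
    · exact fun ⟨haC, haS⟩ ↦ ⟨haC, fun haZ ↦ hZS.ne_of_mem haZ haS rfl⟩
    · exact fun ⟨haC, haZ⟩ ↦ ⟨haC, (hCZS haC).resolve_left haZ⟩
  rw [hCS, add_comm, ncard_sdiff_add_ncard_of_subset hZC hC]

theorem propS1Set_Hcol {M : Matroid α} {S : Set α} {Z : ℕ → Set α} (hM : M.Paving)
    (hZ : Monotone Z) (hZS : ∀ i, Disjoint (Z i) S) : PropS1Set (Hcol M S M.rank Z) := by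
  rintro _ ⟨CA, iA, hiA, hiAr, hCA, hCAr, hZCA, hCAZ, rfl⟩
    _ ⟨CB, iB, hiB, hiBr, hCB, hCBr, hZCB, hCBZ, rfl⟩ hAB hBA D hDA hD
  rw [Matroid.isCircuitMin_iff_isCircuit] at hCA hCB
  have hCAfin : CA.Finite := finite_of_ncard_ne_zero (by omega)
  have hCBfin : CB.Finite := finite_of_ncard_ne_zero (by omega)
  have hA := ncard_add_ncard_inter_of_subset_union (hZS iA) hZCA hCAZ hCAfin
  have hB := ncard_add_ncard_inter_of_subset_union (hZS iB) hZCB hCBZ hCBfin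
  have hZAB : Z iA ⊆ Z iB := by
    rcases le_total iA iB with h | h
    · exact hZ h
    · have := ncard_le_ncard (hZ h) (hCAfin.subset hZCA)
      omega
  have hCBCA : (CB \ CA).Subsingleton := by
    have hsub : CB \ CA ⊆ Z iB \ Z iA := fun a ⟨haB, haA⟩ ↦
      ⟨(hCBZ haB).resolve_right fun haS ↦ haA (hBA.subset ⟨haB, haS⟩).1,
        fun haZ ↦ haA (hZCA haZ)⟩
    have hdiff : (Z iB \ Z iA).ncard = 1 := by
      rw [ncard_sdiff hZAB (hCAfin.subset hZCA)]
      omega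
    obtain ⟨x, hx⟩ := ncard_eq_one.mp hdiff
    exact (hx ▸ subsingleton_singleton).anti hsub
  have hDS : D ⊆ S := hDA.trans inter_subset_right
  set C' := Z iB ∪ D
  have hDCA : D ⊆ CA := hDA.trans inter_subset_left
  have hC'fin : C'.Finite := (hCBfin.subset hZCB).union (hCAfin.subset hDCA)
  have hC'r : C'.ncard = M.rank := by
    rw [ncard_union_eq ((hZS iB).mono_right hDS) (hCBfin.subset hZCB)
      (hC'fin.subset subset_union_right)]
    omega
  have hC'cl : C' ⊆ M.closure CA :=
    union_subset (hZCB.trans (hCB.subset_closure_of_subsingleton_diff hCBCA))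
      (hDCA.trans (M.subset_closure CA hCA.subset_ground))
  have hC'dep : M.Dep C' := by
    refine hCA.dep_of_subset_closure hCAfin hC'cl ?_
    rw [← hCAfin.cast_ncard_eq, ← hC'fin.cast_ncard_eq, hCAr, hC'r]
  refine ⟨C', iB, hiB, hiBr,
    Matroid.isCircuitMin_iff_isCircuit.mpr (hM.isCircuit_of_dep hC'dep hC'fin hC'r.le),
    hC'r, subset_union_left, union_subset_union_right _ hDS, ?_⟩
  rw [union_inter_distrib_right, (hZS iB).inter_eq, inter_eq_self_of_subset_left hDS,
    empty_union]

section Orderings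

variable {m : ℕ} (e : ZMod m → α) (j : ZMod m)

lemma monotone_Xset : Monotone (Xset e j) := by
  rintro i i' hii' _ ⟨t, ht, hti, rfl⟩
  exact ⟨t, ht, hti.trans hii', rfl⟩

lemma monotone_Yset : Monotone (Yset e j) := by
  rintro i i' hii' _ ⟨t, ht, hti, rfl⟩
  exact ⟨t, ht, hti.trans hii', rfl⟩

lemma Xset_subset_range (i : ℕ) : Xset e j i ⊆ range e := by
  rintro _ ⟨t, -, -, rfl⟩
  exact mem_range_self _

lemma Yset_subset_range (i : ℕ) : Yset e j i ⊆ range e := by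
  rintro _ ⟨t, -, -, rfl⟩
  exact mem_range_self _

end Orderings

theorem stmt15_general (M : Matroid α) (S : Set α) (hpav : M.Paving)
    (m : ℕ) (e : ZMod m → α)
    (hrange : Set.range e = M.E \ S)
    (j : ZMod m) :
    PropS1Set (Hcol M S M.rank (Xset e j)) ∧
      PropS1Set (Hcol M S M.rank (Yset e j)) := by
  have hrangeS : Disjoint (range e) S := hrange ▸ disjoint_sdiff_left
  exact ⟨propS1Set_Hcol hpav (monotone_Xset e j) (hrangeS.mono_left <| Xset_subset_range e j ·),
    propS1Set_Hcol hpav (monotone_Yset e j) (hrangeS.mono_left <| Yset_subset_range e j ·)⟩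

/-- Claim: the families `H₁, H₂` built from the circuits meeting the elements on
either side of position `j` in a cyclic ordering of `M \ S` satisfy property (S1). -/
theorem stmt15 (M : Matroid α) (S : Set α) (hS : M.IsBase S) (hpav : M.Paving)
    (hrd : (M.del S).rank = M.rank)
    (m : ℕ) (hm : 0 < m) (e : ZMod m → α) (he : Function.Injective e)
    (hrange : Set.range e = M.E \ S)
    (hbase : ∀ i : ZMod m,
      (M.del S).IsBase (e '' {a | ∃ t : ℕ, t < M.rank ∧ a = i + (t : ZMod m)}))
    (j : ZMod m) :
    PropS1Set (Hcol M S M.rank (Xset e j)) ∧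
      PropS1Set (Hcol M S M.rank (Yset e j)) :=
  stmt15_general M S hpav m e hrange j
end
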